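/- Let R be a simple idempotent semiring and ∼ a congruence on R. Then the quotient R/∼ is reduced if and only if R/∼ is multiplicatively cancellative. -/

import Mathlib

/-- A congruence on a semiring, as a relation: an equivalence relation compatible with
addition and multiplication. -/
def IsCong {A : Type*} [Add A] [Mul A] (r : A → A → Prop) : Prop :=
  Equivalence r ∧ (∀ a b c d, r a b → r c d → r (a + c) (b + d)) ∧
    ∀ a b c d, r a b → r c d → r (a * c) (b * d)

/-- A prime congruence: `0` is not congruent to `1`, and whenever
`x*y + z*w ∼ x*w + z*y`, either `x ∼ z` or `y ∼ w`. -/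
def IsPrimeCong {A : Type*} [Add A] [Mul A] [Zero A] [One A] (r : A → A → Prop) : Prop :=
  ¬ r 0 1 ∧ ∀ x y z w, r (x * y + z * w) (x * w + z * y) → r x z ∨ r y w

/-!
Reduced implies cancellative: for a prime congruence `p` on `R/c`, the elements of `R` whose
class is `p`-related to `0` form a saturated ideal not containing `1`, hence `{0}` by simplicity.
So for `s ≠ 0`, primality applied to `s x + 0 y ∼ s y + 0 x` forces `x ∼ y`.

Cancellative implies reduced, for any cancellative idempotent semiring `Q`: the nonzero
fractions of `Q` form a lattice-ordered abelian group, ordered by `a / b ≤ 1 ↔ a + b = b`.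
By Zorn a convex ℓ-subgroup maximal among those avoiding `A / Y` (with `Y < A`) exists, and it
is prime, i.e. contains `s / t ⊔ 1` or `t / s ⊔ 1` for all `s, t`. Modulo a prime convex
ℓ-subgroup the group is totally ordered, and this total preorder pulls back to a cancellative
total preorder on `Q` whose symmetric part is a prime congruence. Separating `x + y` from `y`
(or from `x`) this way, or `0` from the nonzero elements, separates any `x ≠ y`.
-/

section IdemCommSemiring

variable {Q : Type*} [IdemCommSemiring Q]

theorem ne_zero_of_le {a b : Q} (hab : a ≤ b) (ha : a ≠ 0) : b ≠ 0 :=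
  ((pos_iff_ne_zero.2 ha).trans_le hab).ne'

theorem le_of_mul_le_mul_left_of_ne_zero [IsLeftCancelMulZero Q] {a b c : Q} (ha : a ≠ 0)
    (h : a * b ≤ a * c) : b ≤ c := by
  rw [← add_eq_right_iff_le] at h ⊢
  exact mul_left_cancel₀ ha (by rw [mul_add, h])

theorem add_pow_add_le (s t : Q) :
    ∀ n m : ℕ, (s + t) ^ (n + m) ≤ (s + t) ^ n * s ^ m + (s + t) ^ m * t ^ n
  | 0, m => by simp
  | n + 1, 0 => by simp
  | n + 1, m + 1 => by
    have h₁ := add_pow_add_le s t (n + 1) m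
    have h₂ := add_pow_add_le s t n (m + 1)
    set X := (s + t) ^ (n + 1) * s ^ (m + 1) + (s + t) ^ (m + 1) * t ^ (n + 1)
    calc (s + t) ^ (n + 1 + (m + 1))
        = (s + t) ^ (n + 1 + m) * s + (s + t) ^ (n + (m + 1)) * t := by ring
      _ ≤ ((s + t) ^ (n + 1) * s ^ m + (s + t) ^ m * t ^ (n + 1)) * s +
          ((s + t) ^ n * s ^ (m + 1) + (s + t) ^ (m + 1) * t ^ n) * t := by gcongr
      _ = X + ((s + t) ^ m * s * t ^ (n + 1) + (s + t) ^ n * t * s ^ (m + 1)) := by ring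
      _ ≤ X + ((s + t) ^ m * (s + t) * t ^ (n + 1) + (s + t) ^ n * (s + t) * s ^ (m + 1)) := by
          gcongr
          · exact le_self_add
          · exact le_add_self
      _ = X + X := by ring
      _ = X := add_idem X

end IdemCommSemiring

structure IsCancelTotalPreorder {Q : Type*} [CommSemiring Q] (r : Q → Q → Prop) : Prop where
  refl : ∀ a, r a a
  trans : ∀ {a b c}, r a b → r b c → r a c
  total : ∀ a b, r a b ∨ r b a
  zero_le : ∀ a, r 0 a
  add_right : ∀ {a b} c, r a b → r (a + c) (b + c)
  mul_right : ∀ {a b} c, r a b → r (a * c) (b * c)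
  of_mul_right : ∀ {a b c}, ¬ r c 0 → r (a * c) (b * c) → r a b
  not_one_le_zero : ¬ r 1 0

namespace IsCancelTotalPreorder

variable {Q : Type*}

section CommSemiring

variable [CommSemiring Q] {r : Q → Q → Prop} (hr : IsCancelTotalPreorder r)
include hr

theorem add_le_add {a b c d : Q} (hab : r a b) (hcd : r c d) : r (a + c) (b + d) :=
  hr.trans (hr.add_right c hab) (by simpa only [add_comm b] using hr.add_right b hcd)

theorem mul_le_mul {a b c d : Q} (hab : r a b) (hcd : r c d) : r (a * c) (b * d) :=
  hr.trans (hr.mul_right c hab) (by simpa only [mul_comm b] using hr.mul_right b hcd)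

theorem isCong_symm : IsCong fun a b => r a b ∧ r b a :=
  ⟨⟨fun a => ⟨hr.refl a, hr.refl a⟩, And.symm,
      fun h₁ h₂ => ⟨hr.trans h₁.1 h₂.1, hr.trans h₂.2 h₁.2⟩⟩,
    fun _ _ _ _ h₁ h₂ => ⟨hr.add_le_add h₁.1 h₂.1, hr.add_le_add h₁.2 h₂.2⟩,
    fun _ _ _ _ h₁ h₂ => ⟨hr.mul_le_mul h₁.1 h₂.1, hr.mul_le_mul h₁.2 h₂.2⟩⟩

end CommSemiring

variable [IdemCommSemiring Q] {r : Q → Q → Prop} (hr : IsCancelTotalPreorder r)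
include hr

theorem add_le_of_le {a b : Q} (h : r a b) : r (a + b) b := by
  simpa only [add_idem] using hr.add_right b h

theorem le_add_left (a b : Q) : r b (a + b) := by
  simpa only [zero_add] using hr.add_right b (hr.zero_le a)

/-- Both `x * w` and `z * y` lie strictly below `z * w`, which lies below `x * y + z * w`. -/
theorem not_mul_add_mul_le {x y z w : Q} (hzx : ¬ r z x) (hwy : ¬ r w y) :
    ¬ r (x * y + z * w) (x * w + z * y) := by
  intro h
  have hw : ¬ r w 0 := fun h => hwy (hr.trans h (hr.zero_le y))
  have hz : ¬ r z 0 := fun h => hzx (hr.trans h (hr.zero_le x))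
  have hzw : r (z * w) (x * w + z * y) := hr.trans (hr.le_add_left _ _) h
  rcases hr.total (x * w) (z * y) with h' | h'
  · exact hwy <| hr.of_mul_right hz <| by
      simpa only [mul_comm z] using hr.trans hzw (hr.add_le_of_le h')
  · exact hzx <| hr.of_mul_right hw <| hr.trans hzw <| by
      simpa only [add_comm] using hr.add_le_of_le h'

theorem isPrimeCong_symm : IsPrimeCong fun a b => r a b ∧ r b a := by
  refine ⟨fun h => hr.not_one_le_zero h.2, fun x y z w h => ?_⟩
  by_contra hne
  simp only [not_or, not_and_or] at hne
  obtain ⟨hxz | hzx, hyw | hwy⟩ := hne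
  · exact hr.not_mul_add_mul_le hxz hyw (by simpa only [add_comm] using h.1)
  · exact hr.not_mul_add_mul_le hxz hwy (by simpa only [add_comm] using h.2)
  · exact hr.not_mul_add_mul_le hzx hyw h.2
  · exact hr.not_mul_add_mul_le hzx hwy h.1

end IsCancelTotalPreorder

section ConvexLSubgroup

variable {Q : Type*} [IdemCommSemiring Q]

/-- `(a, b) ∈ C` encodes that the fraction `a / b` of nonzero elements of `Q` lies in a convex
ℓ-subgroup of the group of fractions; `(a + b, b)` encodes `a / b ⊔ 1`. -/
structure IsConvexLSubgroup (C : Set (Q × Q)) : Prop where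
  ne_zero : ∀ {a b}, (a, b) ∈ C → a ≠ 0 ∧ b ≠ 0
  diag_mem : ∀ {a}, a ≠ 0 → (a, a) ∈ C
  swap_mem : ∀ {a b}, (a, b) ∈ C → (b, a) ∈ C
  mul_mem : ∀ {a b c d}, (a, b) ∈ C → (c, d) ∈ C → (a * c, b * d) ∈ C
  mem_of_mul_eq : ∀ {a b c d}, (a, b) ∈ C → a * d = c * b → c ≠ 0 → d ≠ 0 → (c, d) ∈ C
  mem_of_le : ∀ {a b c d}, b ≠ 0 → b ≤ a → a * d ≤ c * b → (c, d) ∈ C → (a, b) ∈ C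
  add_mem : ∀ {a b}, (a, b) ∈ C → (a + b, b) ∈ C

structure IsPrimeLSubgroup (C : Set (Q × Q)) : Prop extends IsConvexLSubgroup C where
  add_mem_or_add_mem : ∀ {s t}, s ≠ 0 → t ≠ 0 → (s + t, t) ∈ C ∨ (s + t, s) ∈ C

theorem IsConvexLSubgroup.sUnion {S : Set (Set (Q × Q))} (hS : ∀ C ∈ S, IsConvexLSubgroup C)
    (hchain : IsChain (· ⊆ ·) S) (hne : S.Nonempty) : IsConvexLSubgroup (⋃₀ S) where
  ne_zero := by rintro a b ⟨C, hC, h⟩; exact (hS C hC).ne_zero h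
  diag_mem ha := by obtain ⟨C, hC⟩ := hne; exact ⟨C, hC, (hS C hC).diag_mem ha⟩
  swap_mem := by rintro a b ⟨C, hC, h⟩; exact ⟨C, hC, (hS C hC).swap_mem h⟩
  mul_mem := by
    rintro a b c d ⟨C, hC, h⟩ ⟨D, hD, h'⟩
    rcases hchain.total hC hD with hCD | hDC
    · exact ⟨D, hD, (hS D hD).mul_mem (hCD h) h'⟩
    · exact ⟨C, hC, (hS C hC).mul_mem h (hDC h')⟩
  mem_of_mul_eq := by
    rintro a b c d ⟨C, hC, h⟩ hcross hc hd; exact ⟨C, hC, (hS C hC).mem_of_mul_eq h hcross hc hd⟩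
  mem_of_le := by
    rintro a b c d hb hba hle ⟨C, hC, h⟩; exact ⟨C, hC, (hS C hC).mem_of_le hb hba hle h⟩
  add_mem := by rintro a b ⟨C, hC, h⟩; exact ⟨C, hC, (hS C hC).add_mem h⟩

variable [IsDomain Q] {M : Set (Q × Q)}

theorem IsConvexLSubgroup.frac_add_mem (hM : IsConvexLSubgroup M) {x v y w : Q}
    (h₁ : (x, v) ∈ M) (h₂ : (y, w) ∈ M) : (x * w + y * v, v * w) ∈ M := by
  obtain ⟨hx, hv⟩ := hM.ne_zero h₁
  obtain ⟨-, hw⟩ := hM.ne_zero h₂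
  have h := hM.mul_mem (hM.add_mem (hM.mul_mem h₂ (hM.swap_mem h₁))) h₁
  exact hM.mem_of_mul_eq h (by ring) (ne_zero_of_le le_self_add (mul_ne_zero hx hw))
    (mul_ne_zero hv hw)

theorem isConvexLSubgroup_diagonal : IsConvexLSubgroup {p : Q × Q | p.1 ≠ 0 ∧ p.1 = p.2} where
  ne_zero := by rintro a b ⟨ha, h : a = b⟩; exact ⟨ha, h ▸ ha⟩
  diag_mem ha := ⟨ha, rfl⟩
  swap_mem := by rintro a b ⟨ha, h : a = b⟩; exact ⟨h ▸ ha, h.symm⟩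
  mul_mem := by
    rintro a b c d ⟨ha, h : a = b⟩ ⟨hc, h' : c = d⟩
    exact ⟨mul_ne_zero ha hc, by rw [h, h']⟩
  mem_of_mul_eq := by
    rintro a b c d ⟨ha, rfl : a = b⟩ h hc -
    exact ⟨hc, mul_left_cancel₀ ha (by rw [h, mul_comm])⟩
  mem_of_le := by
    rintro a b c d hb hba h ⟨hc, rfl : c = d⟩
    refine ⟨ne_zero_of_le hba hb, le_antisymm ?_ hba⟩
    exact le_of_mul_le_mul_left_of_ne_zero hc (by rwa [mul_comm c a])
  add_mem := by rintro a b ⟨ha, rfl : a = b⟩; exact ⟨by rwa [add_idem], add_idem a⟩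

theorem isPrimeLSubgroup_ne_zero : IsPrimeLSubgroup {p : Q × Q | p.1 ≠ 0 ∧ p.2 ≠ 0} where
  ne_zero h := h
  diag_mem ha := ⟨ha, ha⟩
  swap_mem h := h.symm
  mul_mem h₁ h₂ := ⟨mul_ne_zero h₁.1 h₂.1, mul_ne_zero h₁.2 h₂.2⟩
  mem_of_mul_eq _ _ hc hd := ⟨hc, hd⟩
  mem_of_le hb hba _ _ := ⟨ne_zero_of_le hba hb, hb⟩
  add_mem h := ⟨ne_zero_of_le le_self_add h.1, h.2⟩
  add_mem_or_add_mem _ ht := Or.inl ⟨ne_zero_of_le le_add_self ht, ht⟩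

theorem exists_maximal_isConvexLSubgroup_not_mem {A Y : Q} (hAY : A ≠ Y) :
    ∃ M, Maximal (fun C => IsConvexLSubgroup C ∧ (A, Y) ∉ C) M := by
  obtain ⟨M, -, hM⟩ := zorn_subset_nonempty {C | IsConvexLSubgroup C ∧ (A, Y) ∉ C}
    (fun S hS hchain hne => ⟨⋃₀ S,
      ⟨IsConvexLSubgroup.sUnion (fun C hC => (hS hC).1) hchain hne,
        fun ⟨C, hC, h⟩ => (hS hC).2 h⟩, fun _ => Set.subset_sUnion_of_mem⟩)
    _ ⟨isConvexLSubgroup_diagonal, fun h => hAY h.2⟩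
  exact ⟨M, hM⟩

end ConvexLSubgroup

section Adjoin

variable {Q : Type*} [IdemCommSemiring Q] {M : Set (Q × Q)}

/-- As `(a + b) ^ 2 / (a b) = (a / b ⊔ 1) (b / a ⊔ 1)` is the absolute value of `a / b`, for
`v ≤ u` this is the convex ℓ-subgroup generated by `M` and `u / v`. -/
def adjoinFrac (M : Set (Q × Q)) (u v : Q) : Set (Q × Q) :=
  {p | p.1 ≠ 0 ∧ p.2 ≠ 0 ∧
    ∃ n : ℕ, ∃ c d, (c, d) ∈ M ∧ (p.1 + p.2) ^ 2 * d * v ^ n ≤ c * u ^ n * (p.1 * p.2)}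

theorem add_sq_mul_mul_le (a b c d : Q) : (a * c + b * d) ^ 2 ≤ (a + b) ^ 2 * (c + d) ^ 2 := by
  rw [← mul_pow]
  gcongr
  calc a * c + b * d ≤ a * c + b * d + (a * d + b * c) := le_self_add
    _ = (a + b) * (c + d) := by ring

theorem IsConvexLSubgroup.subset_adjoinFrac (hM : IsConvexLSubgroup M) (u v : Q) :
    M ⊆ adjoinFrac M u v := by
  rintro ⟨a, b⟩ h
  obtain ⟨ha, hb⟩ := hM.ne_zero h
  have hsq : ((a + b) ^ 2, a * b) ∈ M := by
    simpa only [add_comm b, mul_comm b, ← sq] using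
      hM.mul_mem (hM.add_mem h) (hM.add_mem (hM.swap_mem h))
  exact ⟨ha, hb, 0, _, _, hsq, by rw [pow_zero, pow_zero, mul_one, mul_one, mul_comm]⟩

variable [IsDomain Q]

theorem isConvexLSubgroup_adjoinFrac (hM : IsConvexLSubgroup M) (u v : Q) :
    IsConvexLSubgroup (adjoinFrac M u v) where
  ne_zero h := ⟨h.1, h.2.1⟩
  diag_mem {a} ha := ⟨ha, ha, 0, 1, 1, hM.diag_mem one_ne_zero, by rw [add_idem]; simp [sq]⟩
  swap_mem := by
    rintro a b ⟨ha, hb, n, c, d, hcd, h⟩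
    exact ⟨hb, ha, n, c, d, hcd, by rwa [add_comm b, mul_comm b]⟩
  mul_mem := by
    rintro a b a' b' ⟨ha, hb, n, c, d, hcd, h⟩ ⟨ha', hb', n', c', d', hcd', h'⟩
    refine ⟨mul_ne_zero ha ha', mul_ne_zero hb hb', n + n', c * c', d * d',
      hM.mul_mem hcd hcd', ?_⟩
    calc (a * a' + b * b') ^ 2 * (d * d') * v ^ (n + n')
        ≤ (a + b) ^ 2 * (a' + b') ^ 2 * (d * d') * v ^ (n + n') := by
          gcongr; exact add_sq_mul_mul_le a b a' b'
      _ = ((a + b) ^ 2 * d * v ^ n) * ((a' + b') ^ 2 * d' * v ^ n') := by ring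
      _ ≤ (c * u ^ n * (a * b)) * (c' * u ^ n' * (a' * b')) := by gcongr
      _ = c * c' * u ^ (n + n') * (a * a' * (b * b')) := by ring
  mem_of_mul_eq := by
    rintro a b a' b' ⟨ha, hb, n, c, d, hcd, h⟩ hcross ha' hb'
    refine ⟨ha', hb', n, c, d, hcd, le_of_mul_le_mul_left_of_ne_zero (mul_ne_zero ha hb) ?_⟩
    have e₁ : (a' * a) * (a' * b) = (a' * a) * (a * b') := by rw [hcross]
    have e₂ : (b' * b) * (a * b') = (b' * b) * (a' * b) := by rw [hcross]
    calc a * b * ((a' + b') ^ 2 * d * v ^ n)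
        = ((a' * a) * (a' * b) + 2 * (a' * b' * (a * b)) + (b' * b) * (a * b')) * d * v ^ n := by
          ring
      _ = (a + b) ^ 2 * d * v ^ n * (a' * b') := by rw [e₁, e₂]; ring
      _ ≤ c * u ^ n * (a * b) * (a' * b') := by gcongr
      _ = a * b * (c * u ^ n * (a' * b')) := by ring
  mem_of_le := by
    rintro a b a' b' hb hba hle ⟨ha', hb', n, c, d, hcd, h⟩
    have ha : a ≠ 0 := ne_zero_of_le hba hb
    have hab : a + b = a := add_eq_left_iff_le.2 hba
    have hab' : a' + b' = a' := add_eq_left_iff_le.2 <| le_of_mul_le_mul_left_of_ne_zero hb <|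
      calc b * b' ≤ a * b' := by gcongr
        _ ≤ a' * b := hle
        _ = b * a' := mul_comm _ _
    have h' : a' * d * v ^ n ≤ c * u ^ n * b' := le_of_mul_le_mul_left_of_ne_zero ha' <|
      calc a' * (a' * d * v ^ n) = (a' + b') ^ 2 * d * v ^ n := by rw [hab']; ring
        _ ≤ c * u ^ n * (a' * b') := h
        _ = a' * (c * u ^ n * b') := by ring
    refine ⟨ha, hb, n, c, d, hcd, le_of_mul_le_mul_left_of_ne_zero hb' ?_⟩
    calc b' * ((a + b) ^ 2 * d * v ^ n) = a * (a * b') * d * v ^ n := by rw [hab]; ring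
      _ ≤ a * (a' * b) * d * v ^ n := by gcongr
      _ = a * b * (a' * d * v ^ n) := by ring
      _ ≤ a * b * (c * u ^ n * b') := by gcongr
      _ = b' * (c * u ^ n * (a * b)) := by ring
  add_mem := by
    rintro a b ⟨ha, hb, n, c, d, hcd, h⟩
    refine ⟨ne_zero_of_le le_self_add ha, hb, n, c, d, hcd, ?_⟩
    calc (a + b + b) ^ 2 * d * v ^ n = (a + b) ^ 2 * d * v ^ n := by rw [add_assoc, add_idem]
      _ ≤ c * u ^ n * (a * b) := h
      _ ≤ c * u ^ n * ((a + b) * b) := by gcongr; exact le_self_add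

theorem IsConvexLSubgroup.mem_adjoinFrac_self (hM : IsConvexLSubgroup M) {u v : Q} (hv : v ≠ 0)
    (hvu : v ≤ u) :
    (u, v) ∈ adjoinFrac M u v :=
  ⟨ne_zero_of_le hvu hv, hv, 1, 1, 1, hM.diag_mem one_ne_zero, by
    rw [add_eq_left_iff_le.2 hvu]; ring_nf; rfl⟩

end Adjoin

section Prime

variable {Q : Type*} [IdemCommSemiring Q] [IsDomain Q] {M : Set (Q × Q)} {A Y : Q}

theorem exists_le_of_maximal (hM : Maximal (fun C => IsConvexLSubgroup C ∧ (A, Y) ∉ C) M)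
    (hYA : Y ≤ A) {u v : Q} (hv : v ≠ 0) (hvu : v ≤ u) (huv : (u, v) ∉ M) :
    ∃ n : ℕ, ∃ c d, (c, d) ∈ M ∧ A * d * v ^ n ≤ c * u ^ n * Y := by
  have hmem : (A, Y) ∈ adjoinFrac M u v := by
    by_contra h
    exact huv <| hM.2 ⟨isConvexLSubgroup_adjoinFrac hM.1.1 u v, h⟩
      (hM.1.1.subset_adjoinFrac u v) (hM.1.1.mem_adjoinFrac_self hv hvu)
  obtain ⟨hA, -, n, c, d, hcd, h⟩ := hmem
  refine ⟨n, c, d, hcd, le_of_mul_le_mul_left_of_ne_zero hA ?_⟩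
  calc A * (A * d * v ^ n) = (A + Y) ^ 2 * d * v ^ n := by rw [add_eq_left_iff_le.2 hYA]; ring
    _ ≤ c * u ^ n * (A * Y) := h
    _ = A * (c * u ^ n * Y) := by ring

theorem isPrimeLSubgroup_of_maximal
    (hM : Maximal (fun C => IsConvexLSubgroup C ∧ (A, Y) ∉ C) M) (hY : Y ≠ 0) (hYA : Y ≤ A) :
    IsPrimeLSubgroup M where
  toIsConvexLSubgroup := hM.1.1
  add_mem_or_add_mem {s t} hs ht := by
    -- Adjoining `s / t ⊔ 1`, resp. `t / s ⊔ 1`, to `M` captures `A / Y`; as the two bounds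
    -- combine (via `add_pow_add_le`) to `A / Y ≤ c / d + c' / d'`, already `M` contains `A / Y`.
    by_contra! h
    obtain ⟨n, c, d, hcd, h₁⟩ := exists_le_of_maximal hM hYA ht le_add_self h.1
    obtain ⟨m, c', d', hcd', h₂⟩ := exists_le_of_maximal hM hYA hs le_self_add h.2
    have key : A * (d * d') ≤ (c * d' + c' * d) * Y :=
      le_of_mul_le_mul_left_of_ne_zero (pow_ne_zero (n + m) (ne_zero_of_le le_self_add hs)) <|
      calc (s + t) ^ (n + m) * (A * (d * d'))
          ≤ ((s + t) ^ n * s ^ m + (s + t) ^ m * t ^ n) * (A * (d * d')) := by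
            gcongr; exact add_pow_add_le s t n m
        _ = (s + t) ^ n * d * (A * d' * s ^ m) + (s + t) ^ m * d' * (A * d * t ^ n) := by ring
        _ ≤ (s + t) ^ n * d * (c' * (s + t) ^ m * Y) +
            (s + t) ^ m * d' * (c * (s + t) ^ n * Y) := by gcongr
        _ = (s + t) ^ (n + m) * ((c * d' + c' * d) * Y) := by ring
    exact hM.1.2 (hM.1.1.mem_of_le hY hYA key (hM.1.1.frac_add_mem hcd hcd'))

theorem exists_isPrimeLSubgroup_not_mem (hY : Y ≠ 0) (hYA : Y ≤ A) (hAY : A ≠ Y) :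
    ∃ M, IsPrimeLSubgroup M ∧ (A, Y) ∉ M := by
  obtain ⟨M, hM⟩ := exists_maximal_isConvexLSubgroup_not_mem hAY
  exact ⟨M, isPrimeLSubgroup_of_maximal hM hY hYA, hM.1.2⟩

end Prime

section FracLE

variable {Q : Type*} [IdemCommSemiring Q] {M : Set (Q × Q)}

/-- `fracLE M u v` says that `u / v ≤ 1` modulo `M`. -/
def fracLE (M : Set (Q × Q)) (u v : Q) : Prop := u = 0 ∨ v ≠ 0 ∧ (u + v, v) ∈ M

namespace IsConvexLSubgroup

variable (hM : IsConvexLSubgroup M)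
include hM

theorem fracLE_of_le {u v : Q} (h : u ≤ v) : fracLE M u v :=
  or_iff_not_imp_left.2 fun hu =>
    ⟨ne_zero_of_le h hu, by rw [add_eq_right_iff_le.2 h]; exact hM.diag_mem (ne_zero_of_le h hu)⟩

theorem fracLE_trans {u v w : Q} (h₁ : fracLE M u v) (h₂ : fracLE M v w) : fracLE M u w := by
  rcases h₁ with hu | ⟨hv, huv⟩
  · exact Or.inl hu
  rcases h₂ with hv' | ⟨hw, hvw⟩
  · exact absurd hv' hv
  refine Or.inr ⟨hw, hM.mem_of_le hw le_add_self ?_ (hM.mul_mem huv hvw)⟩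
  calc (u + w) * (v * w) = u * v * w + v * w * w := by ring
    _ ≤ (u + v) * (v + w) * w + (u + v) * (v + w) * w := by
        gcongr
        exacts [le_self_add, le_self_add, le_add_self, le_add_self]
    _ = (u + v) * (v + w) * w := add_idem _

theorem fracLE_add_right {u v : Q} (h : fracLE M u v) (w : Q) : fracLE M (u + w) (v + w) := by
  rcases eq_or_ne u 0 with rfl | hu
  · exact hM.fracLE_of_le (by rw [zero_add]; exact le_add_self)
  rcases hM.fracLE_trans h (hM.fracLE_of_le (le_self_add : v ≤ v + w)) with hu' | ⟨hvw, h'⟩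
  · exact absurd hu' hu
  have e : u + w + (v + w) = u + (v + w) := by rw [add_add_add_comm, add_idem, add_assoc]
  exact Or.inr ⟨hvw, e ▸ h'⟩

variable [IsDomain Q]

theorem fracLE_mul_right {u v : Q} (h : fracLE M u v) (w : Q) : fracLE M (u * w) (v * w) := by
  rcases h with rfl | ⟨hv, huv⟩
  · exact Or.inl (zero_mul w)
  rcases eq_or_ne w 0 with rfl | hw
  · exact Or.inl (mul_zero u)
  exact Or.inr ⟨mul_ne_zero hv hw, by simpa only [add_mul] using hM.mul_mem huv (hM.diag_mem hw)⟩

theorem fracLE_of_mul_right {u v w : Q} (hw : w ≠ 0) (h : fracLE M (u * w) (v * w)) :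
    fracLE M u v := by
  rcases h with h | ⟨hvw, h⟩
  · exact Or.inl ((mul_eq_zero.1 h).resolve_right hw)
  refine or_iff_not_imp_left.2 fun hu => ⟨left_ne_zero_of_mul hvw, ?_⟩
  exact hM.mem_of_mul_eq h (by ring) (ne_zero_of_le le_self_add hu) (left_ne_zero_of_mul hvw)

end IsConvexLSubgroup

variable [IsDomain Q]

theorem IsPrimeLSubgroup.isCancelTotalPreorder (hM : IsPrimeLSubgroup M) :
    IsCancelTotalPreorder (fracLE M) where
  refl u := hM.fracLE_of_le le_rfl
  trans := hM.fracLE_trans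
  total u v := by
    rcases eq_or_ne u 0 with hu | hu
    · exact Or.inl (Or.inl hu)
    rcases eq_or_ne v 0 with hv | hv
    · exact Or.inr (Or.inl hv)
    rcases hM.add_mem_or_add_mem hu hv with h | h
    · exact Or.inl (Or.inr ⟨hv, h⟩)
    · exact Or.inr (Or.inr ⟨hu, by rwa [add_comm]⟩)
  zero_le _ := Or.inl rfl
  add_right w h := hM.fracLE_add_right h w
  mul_right w h := hM.fracLE_mul_right h w
  of_mul_right hw := hM.fracLE_of_mul_right fun h => hw (Or.inl h)
  not_one_le_zero := by rintro (h | ⟨h, -⟩) <;> simp at h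

theorem exists_isPrimeLSubgroup_not_fracLE {x y : Q} (hxy : x + y ≠ y) :
    ∃ M, IsPrimeLSubgroup M ∧ ¬ fracLE M x y := by
  have hx : x ≠ 0 := by rintro rfl; exact hxy (zero_add y)
  by_cases hy : y = 0
  · exact ⟨_, isPrimeLSubgroup_ne_zero, by rintro (h | ⟨h, -⟩); exacts [hx h, h hy]⟩
  obtain ⟨M, hM, hxyM⟩ := exists_isPrimeLSubgroup_not_mem hy le_add_self hxy
  exact ⟨M, hM, by rintro (h | ⟨-, h⟩); exacts [hx h, hxyM h]⟩

theorem exists_isPrimeCong_not_rel {x y : Q} (hxy : x ≠ y) :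
    ∃ p : Q → Q → Prop, IsCong p ∧ IsPrimeCong p ∧ ¬ p x y := by
  obtain ⟨M, hM, hle⟩ : ∃ M, IsPrimeLSubgroup M ∧ ¬ (fracLE M x y ∧ fracLE M y x) := by
    by_cases h : x + y = y
    · obtain ⟨M, hM, hle⟩ := exists_isPrimeLSubgroup_not_fracLE (x := y) (y := x)
        fun h' => hxy (h.symm.trans ((add_comm x y).trans h')).symm
      exact ⟨M, hM, fun h' => hle h'.2⟩
    · obtain ⟨M, hM, hle⟩ := exists_isPrimeLSubgroup_not_fracLE h
      exact ⟨M, hM, fun h' => hle h'.1⟩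
  exact ⟨_, hM.isCancelTotalPreorder.isCong_symm, hM.isCancelTotalPreorder.isPrimeCong_symm, hle⟩

end FracLE

theorem RingCon.eq_zero_of_isPrimeCong {R : Type*} [CommSemiring R]
    (hsimple : ∀ I : Set R,
      0 ∈ I →
      (∀ a b, a ∈ I → b ∈ I → a + b ∈ I) →
      (∀ r a, a ∈ I → r * a ∈ I) →
      (∀ a b, a + b = b → b ∈ I → a ∈ I) →
      I = {0} ∨ I = Set.univ)
    (c : RingCon R) {p : c.Quotient → c.Quotient → Prop} (hp : IsCong p) (hpp : IsPrimeCong p)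
    {s : c.Quotient} (hs : p s 0) : s = 0 := by
  obtain ⟨s, rfl⟩ := Quotient.mk''_surjective s
  obtain ⟨hequiv, hadd, hmul⟩ := hp
  have hI := hsimple {a : R | p a 0} (hequiv.refl _)
    (fun a b ha hb => by
      simpa only [Set.mem_ofPred_eq, c.coe_add, add_zero] using hadd _ _ _ _ ha hb)
    (fun t a ha => by
      simpa only [Set.mem_ofPred_eq, c.coe_mul, mul_zero] using hmul _ _ _ _ (hequiv.refl t) ha)
    (fun a b hab hb => by
      have h := hadd _ _ _ _ (hequiv.refl a) hb
      rw [← c.coe_add, hab, add_zero] at h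
      exact hequiv.trans (hequiv.symm h) hb)
  rcases hI with hI | hI
  · rw [show s = 0 from hI.subset hs]; rfl
  · exact absurd (hequiv.symm (hI.symm.subset (Set.mem_univ (1 : R)))) hpp.1

/-- Let `R` be a simple idempotent semiring and `c` a congruence on `R`.
Then the quotient `R/c` is reduced (the intersection of all prime congruences on it is
equality) if and only if `R/c` is multiplicatively cancellative. -/
theorem statement7 {R : Type*} [CommSemiring R]
    (hidem : ∀ x : R, x + x = x)
    (hsimple : ∀ I : Set R,
      0 ∈ I →
      (∀ a b, a ∈ I → b ∈ I → a + b ∈ I) →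
      (∀ r a, a ∈ I → r * a ∈ I) →
      (∀ a b, a + b = b → b ∈ I → a ∈ I) →
      I = {0} ∨ I = Set.univ)
    (c : RingCon R) :
    (∀ x y : c.Quotient,
        (∀ p : c.Quotient → c.Quotient → Prop, IsCong p → IsPrimeCong p → p x y) → x = y) ↔
      ∀ s x y : c.Quotient, s ≠ 0 → s * x = s * y → x = y := by
  constructor
  · intro hred s x y hs hsxy
    refine hred x y fun p hp hpp => (hpp.2 s x 0 y ?_).resolve_left
      fun h => hs (c.eq_zero_of_isPrimeCong hsimple hp hpp h)
    simpa only [zero_mul, add_zero, hsxy] using hp.1.refl (s * y)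
  · intro hcanc x y hxy
    by_contra hne
    have hidem' (x : c.Quotient) : x + x = x := by
      obtain ⟨a, rfl⟩ := Quotient.mk''_surjective x
      exact congrArg _ (hidem a)
    let : IdemCommSemiring c.Quotient :=
      { (inferInstance : CommSemiring c.Quotient), IdemSemiring.ofSemiring hidem' with }
    have : Nontrivial c.Quotient := ⟨x, y, hne⟩
    have : IsLeftCancelMulZero c.Quotient := ⟨fun hs _ _ h => hcanc _ _ _ hs h⟩
    have : IsDomain c.Quotient := { IsLeftCancelMulZero.to_isCancelMulZero with }
    obtain ⟨p, hp, hpp, hpxy⟩ := exists_isPrimeCong_not_rel hne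
    exact hpxy (hxy p hp hpp)
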